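/- Let γ, σ > 0 and let (S, I, P) be a positive classical solution of the general parabolic Dirichlet problem (1.2) on Ω × (0, ∞). Then for all x ∈ Ω̄ and t ≥ 0, S(x,t) + I(x,t) ≤ max{ max_{Ω̄} (S₀ + I₀), (a−b)/c }. -/

import Mathlib

open Set Filter Topology

noncomputable def vlap {N : ℕ} (f : EuclideanSpace ℝ (Fin N) → ℝ)
    (x : EuclideanSpace ℝ (Fin N)) : ℝ :=
  ∑ i : Fin N, fderiv ℝ (fun y => fderiv ℝ f y (EuclideanSpace.single i 1)) x
    (EuclideanSpace.single i 1)

/-- `u` is a positive classical solution component of a parabolic Dirichlet problem on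
`Ω × (0, ∞)`: continuous on `closure Ω × [0, ∞)`, twice continuously differentiable in
space and once in time, strictly positive in `Ω × (0, ∞)`, vanishing on
`frontier Ω × (0, ∞)`, with positive initial data in `Ω`. -/
def ParaSol {N : ℕ} (Ω : Set (EuclideanSpace ℝ (Fin N)))
    (u : EuclideanSpace ℝ (Fin N) → ℝ → ℝ) : Prop :=
  ContinuousOn (fun p : EuclideanSpace ℝ (Fin N) × ℝ => u p.1 p.2) (closure Ω ×ˢ Ici 0) ∧
  (∀ t > (0 : ℝ), ContDiffOn ℝ 2 (fun y => u y t) Ω) ∧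
  (∀ x ∈ Ω, ContDiffOn ℝ 1 (fun s => u x s) (Ioi 0)) ∧
  (∀ x ∈ Ω, ∀ t > (0 : ℝ), 0 < u x t) ∧
  (∀ x ∈ frontier Ω, ∀ t > (0 : ℝ), u x t = 0) ∧
  (∀ x ∈ Ω, 0 < u x 0)

/-!
Weak maximum principle for `u = S + I`. If `u` exceeded `M = max (max (S₀ + I₀)) ((a - b) / c)`
somewhere in `Ω̄ × [0, T]`, its maximum over that compact set would be attained at a positive time
(as `u(·, 0) ≤ M`) and inside `Ω` (as `u = 0` on `∂Ω`), so `∂ₜu ≥ 0` and `Δu ≤ 0` there. But adding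
the equations for `S` and `I` gives `∂ₜu - dΔu = u ((a - b) - c u) - ℓ S P - γ I P`, which is
negative wherever `u > (a - b) / c`.
-/

open Laplacian

theorem IsMaxOn.deriv_nonneg_of_Icc {f : ℝ → ℝ} {a b : ℝ} (hmax : IsMaxOn f (Icc a b) b)
    (hab : a < b) (hf : DifferentiableAt ℝ f b) : 0 ≤ deriv f b := by
  have hcone : a - b ∈ posTangentConeAt (Icc a b) b :=
    sub_mem_posTangentConeAt_of_segment_subset (by rw [segment_eq_Icc']; simp [hab.le])
  have := hmax.localize.hasFDerivWithinAt_nonpos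
    hf.hasDerivAt.hasDerivWithinAt.hasFDerivWithinAt hcone
  simp only [ContinuousLinearMap.toSpanSingleton_apply, smul_eq_mul] at this
  nlinarith

theorem IsLocalMax.hasDerivAt_nonpos {g g' : ℝ → ℝ} {x₀ A : ℝ} (hmax : IsLocalMax g x₀)
    (hg : ∀ᶠ s in 𝓝 x₀, HasDerivAt g (g' s) s) (hA : HasDerivAt g' A x₀) : A ≤ 0 := by
  by_contra! hApos
  have hderiv : deriv g =ᶠ[𝓝 x₀] g' := hg.mono fun s hs => hs.deriv
  -- If `A > 0`, the second-derivative test makes `x₀` a local minimum as well, so `g` is locally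
  -- constant and `A = 0`.
  have hmin : IsLocalMin g x₀ := by
    refine isLocalMin_of_deriv_deriv_pos ?_ ?_ hg.self_of_nhds.continuousAt
    · rwa [hderiv.deriv_eq, hA.deriv]
    · rw [hderiv.eq_of_nhds, hmax.hasDerivAt_eq_zero hg.self_of_nhds]
  have hconst : g =ᶠ[𝓝 x₀] fun _ => g x₀ :=
    (hmin.and hmax).mono fun s hs => le_antisymm hs.2 hs.1
  have hzero : g' =ᶠ[𝓝 x₀] fun _ => 0 := by
    filter_upwards [hderiv, hconst.deriv] with s h₁ h₂
    rw [← h₁, h₂, deriv_const]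
  exact hApos.ne' (hA.unique ((hasDerivAt_const x₀ (0 : ℝ)).congr_of_eventuallyEq hzero))

theorem IsLocalMax.fderiv_fderiv_apply_self_nonpos {E : Type*} [NormedAddCommGroup E]
    [NormedSpace ℝ E] {f : E → ℝ} {x₀ : E} (hmax : IsLocalMax f x₀) (hf : ContDiffAt ℝ 2 f x₀)
    (e : E) : fderiv ℝ (fderiv ℝ f) x₀ e e ≤ 0 := by
  obtain ⟨line, hline, rfl⟩ : ∃ line : ℝ → E, (∀ s, HasDerivAt line e s) ∧ line 0 = x₀ :=
    ⟨fun s => x₀ + s • e, fun s => by simpa using ((hasDerivAt_id s).smul_const e).const_add x₀,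
      by simp⟩
  have hg : ∀ᶠ s in 𝓝 0, HasDerivAt (f ∘ line) (fderiv ℝ f (line s) e) s := by
    filter_upwards [(hline 0).continuousAt.eventually (hf.eventually (by simp))] with s hs
    exact (hs.differentiableAt (by simp)).hasFDerivAt.comp_hasDerivAt s (hline s)
  have hA : HasDerivAt (fun s => fderiv ℝ f (line s) e) (fderiv ℝ (fderiv ℝ f) (line 0) e e) 0 :=
    (ContinuousLinearMap.apply ℝ ℝ e).hasFDerivAt.comp_hasDerivAt 0
      (((hf.fderiv_right (m := 1) le_rfl).differentiableAt one_ne_zero).hasFDerivAt.comp_hasDerivAt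
        0 (hline 0))
  exact IsLocalMax.hasDerivAt_nonpos (hmax.comp_continuous (hline 0).continuousAt) hg hA

theorem IsLocalMax.laplacian_nonpos {E : Type*} [NormedAddCommGroup E] [InnerProductSpace ℝ E]
    [FiniteDimensional ℝ E] {f : E → ℝ} {x₀ : E} (hmax : IsLocalMax f x₀)
    (hf : ContDiffAt ℝ 2 f x₀) : Δ f x₀ ≤ 0 := by
  rw [InnerProductSpace.laplacian_eq_iteratedFDeriv_stdOrthonormalBasis]
  exact Finset.sum_nonpos fun i _ => by
    simpa [iteratedFDeriv_two_apply] using hmax.fderiv_fderiv_apply_self_nonpos hf _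

theorem parabolic_weak_maximum_principle {E : Type*} [NormedAddCommGroup E]
    [InnerProductSpace ℝ E] [FiniteDimensional ℝ E] {Ω : Set E} (hΩ : IsOpen Ω)
    (hΩbd : Bornology.IsBounded Ω) {u : E → ℝ → ℝ} {d M : ℝ} (hd : 0 ≤ d)
    (hcont : ContinuousOn (fun p : E × ℝ => u p.1 p.2) (closure Ω ×ˢ Ici 0))
    (hx : ∀ t > 0, ContDiffOn ℝ 2 (fun y => u y t) Ω)
    (ht : ∀ x ∈ Ω, ∀ t > 0, DifferentiableAt ℝ (u x) t)
    (hinit : ∀ x ∈ closure Ω, u x 0 ≤ M) (hfront : ∀ x ∈ frontier Ω, ∀ t > 0, u x t ≤ M)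
    (hsuper : ∀ x ∈ Ω, ∀ t > 0, M < u x t → deriv (u x) t - d * Δ (fun y => u y t) x < 0) :
    ∀ x ∈ closure Ω, ∀ t ≥ 0, u x t ≤ M := by
  by_contra! ⟨x₁, hx₁, t₁, ht₁, hgt⟩
  obtain ⟨⟨x₀, t₀⟩, ⟨hx₀, ht₀, ht₀t₁⟩, hmax⟩ :=
    (hΩbd.isCompact_closure.prod isCompact_Icc).exists_isMaxOn ⟨(x₁, t₁), hx₁, ht₁, le_rfl⟩
      (hcont.mono (prod_mono subset_rfl Icc_subset_Ici_self))
  rw [isMaxOn_iff] at hmax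
  have hgt₀ : M < u x₀ t₀ := hgt.trans_le (hmax (x₁, t₁) ⟨hx₁, ht₁, le_rfl⟩)
  have ht₀pos : 0 < t₀ := ht₀.lt_of_ne fun h => (hinit x₀ hx₀).not_gt (h ▸ hgt₀)
  have hx₀Ω : x₀ ∈ Ω := by
    rw [closure_eq_interior_union_frontier, hΩ.interior_eq] at hx₀
    exact hx₀.resolve_right fun h => (hfront x₀ h t₀ ht₀pos).not_gt hgt₀
  have htime : 0 ≤ deriv (u x₀) t₀ :=
    IsMaxOn.deriv_nonneg_of_Icc (fun s hs => hmax (x₀, s) ⟨hx₀, hs.1, hs.2.trans ht₀t₁⟩) ht₀pos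
      (ht x₀ hx₀Ω t₀ ht₀pos)
  have hspace : Δ (fun y => u y t₀) x₀ ≤ 0 :=
    IsLocalMax.laplacian_nonpos
      (mem_of_superset (hΩ.mem_nhds hx₀Ω) fun y hy => hmax (y, t₀) ⟨subset_closure hy, ht₀, ht₀t₁⟩)
      ((hx t₀ ht₀pos).contDiffAt (hΩ.mem_nhds hx₀Ω))
  linarith [hsuper x₀ hx₀Ω t₀ ht₀pos hgt₀, mul_nonpos_of_nonneg_of_nonpos hd hspace]

theorem vlap_eq_laplacian {N : ℕ} {f : EuclideanSpace ℝ (Fin N) → ℝ}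
    {x : EuclideanSpace ℝ (Fin N)} (hf : DifferentiableAt ℝ (fderiv ℝ f) x) :
    vlap f x = Δ f x := by
  rw [InnerProductSpace.laplacian_eq_iteratedFDeriv_orthonormalBasis f
    (EuclideanSpace.basisFun _ ℝ)]
  refine Finset.sum_congr rfl fun i _ => ?_
  rw [iteratedFDeriv_two_apply, fderiv_clm_apply hf (differentiableAt_const _)]
  simp

namespace ParaSol

variable {N : ℕ} {Ω : Set (EuclideanSpace ℝ (Fin N))} {u v : EuclideanSpace ℝ (Fin N) → ℝ → ℝ}
  {x : EuclideanSpace ℝ (Fin N)} {t : ℝ}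

theorem add (hu : ParaSol Ω u) (hv : ParaSol Ω v) : ParaSol Ω (fun x t => u x t + v x t) := by
  obtain ⟨hu₁, hu₂, hu₃, hu₄, hu₅, hu₆⟩ := hu
  obtain ⟨hv₁, hv₂, hv₃, hv₄, hv₅, hv₆⟩ := hv
  exact ⟨hu₁.add hv₁, fun t ht => (hu₂ t ht).add (hv₂ t ht),
    fun x hx => (hu₃ x hx).add (hv₃ x hx), fun x hx t ht => add_pos (hu₄ x hx t ht) (hv₄ x hx t ht),
    fun x hx t ht => by simp [hu₅ x hx t ht, hv₅ x hx t ht],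
    fun x hx => add_pos (hu₆ x hx) (hv₆ x hx)⟩

theorem contDiffAt (hu : ParaSol Ω u) (hΩ : IsOpen Ω) (hx : x ∈ Ω) (ht : 0 < t) :
    ContDiffAt ℝ 2 (fun y => u y t) x :=
  (hu.2.1 t ht).contDiffAt (hΩ.mem_nhds hx)

theorem differentiableAt (hu : ParaSol Ω u) (hx : x ∈ Ω) (ht : 0 < t) :
    DifferentiableAt ℝ (u x) t :=
  ((hu.2.2.1 x hx).contDiffAt (Ioi_mem_nhds ht)).differentiableAt one_ne_zero

theorem vlap_eq_laplacian (hu : ParaSol Ω u) (hΩ : IsOpen Ω) (hx : x ∈ Ω) (ht : 0 < t) :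
    vlap (fun y => u y t) x = Δ (fun y => u y t) x :=
  _root_.vlap_eq_laplacian
    (((hu.contDiffAt hΩ hx ht).fderiv_right (m := 1) le_rfl).differentiableAt one_ne_zero)

end ParaSol

theorem stmt15_general {N : ℕ} (Ω : Set (EuclideanSpace ℝ (Fin N)))
    (hΩopen : IsOpen Ω) (hΩbd : Bornology.IsBounded Ω)
    (a b c k el gam d : ℝ) (hc : 0 < c)
    (hel : 0 < el) (hgam : 0 < gam)
    (hd : 0 < d) (hab : b < a)
    (S I P : EuclideanSpace ℝ (Fin N) → ℝ → ℝ)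
    (hS : ParaSol Ω S) (hI : ParaSol Ω I) (hP : ParaSol Ω P)
    (heqS : ∀ x ∈ Ω, ∀ t > (0 : ℝ),
      deriv (fun s => S x s) t - d * vlap (fun y => S y t) x
        = a * (S x t + I x t) - b * S x t - c * (S x t + I x t) * S x t
          - k * I x t * S x t - el * S x t * P x t)
    (heqI : ∀ x ∈ Ω, ∀ t > (0 : ℝ),
      deriv (fun s => I x s) t - d * vlap (fun y => I y t) x
        = k * I x t * S x t - b * I x t - c * (S x t + I x t) * I x t
          - gam * I x t * P x t) :
    ∀ x ∈ closure Ω, ∀ t ≥ (0 : ℝ),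
      S x t + I x t
        ≤ max (sSup ((fun y => S y 0 + I y 0) '' closure Ω)) ((a - b) / c) := by
  have hu := hS.add hI
  have hM : 0 < max (sSup ((fun y => S y 0 + I y 0) '' closure Ω)) ((a - b) / c) :=
    (div_pos (sub_pos.2 hab) hc).trans_le (le_max_right _ _)
  have hinit_cont : ContinuousOn (fun y => S y 0 + I y 0) (closure Ω) :=
    hu.1.comp (continuous_id.prodMk continuous_const).continuousOn fun y hy => ⟨hy, self_mem_Ici⟩
  have hbdd := (hΩbd.isCompact_closure.image_of_continuousOn hinit_cont).bddAbove
  refine parabolic_weak_maximum_principle hΩopen hΩbd hd.le hu.1 hu.2.1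
    (fun x hx t ht => hu.differentiableAt hx ht)
    (fun x hx => (le_csSup hbdd (mem_image_of_mem _ hx)).trans (le_max_left _ _))
    (fun x hx t ht => (hu.2.2.2.2.1 x hx t ht).trans_le hM.le) ?_
  intro x hx t ht hMu
  have hderiv : deriv (fun s => S x s + I x s) t = deriv (S x) t + deriv (I x) t :=
    deriv_add (hS.differentiableAt hx ht) (hI.differentiableAt hx ht)
  have hlap : Δ (fun y => S y t + I y t) x = vlap (fun y => S y t) x + vlap (fun y => I y t) x := by
    rw [hS.vlap_eq_laplacian hΩopen hx ht, hI.vlap_eq_laplacian hΩopen hx ht]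
    exact (hS.contDiffAt hΩopen hx ht).laplacian_add (hI.contDiffAt hΩopen hx ht)
  have hcu : a - b < c * (S x t + I x t) := (div_lt_iff₀' hc).1 ((le_max_right _ _).trans_lt hMu)
  have hSpos := hS.2.2.2.1 x hx t ht
  have hIpos := hI.2.2.2.1 x hx t ht
  have hPpos := hP.2.2.2.1 x hx t ht
  rw [hderiv, hlap]
  nlinarith [heqS x hx t ht, heqI x hx t ht, mul_pos hel (mul_pos hSpos hPpos),
    mul_pos hgam (mul_pos hIpos hPpos), mul_pos (add_pos hSpos hIpos) (sub_pos.2 hcu)]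

/-- A priori bound: for any positive classical solution of the general problem (1.2),
S + I ≤ max { max_Ω̄ (S₀ + I₀), (a-b)/c } on Ω̄ × [0, ∞). -/
theorem stmt15 {N : ℕ} (hN : 1 ≤ N) (Ω : Set (EuclideanSpace ℝ (Fin N)))
    (hΩopen : IsOpen Ω) (hΩconn : IsConnected Ω) (hΩbd : Bornology.IsBounded Ω)
    (a b c k el gam th sig rh d D : ℝ) (ha : 0 < a) (hb : 0 < b) (hc : 0 < c)
    (hk : 0 < k) (hel : 0 < el) (hgam : 0 < gam) (hth : 0 < th) (hsig : 0 < sig)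
    (hrh : 0 < rh) (hd : 0 < d) (hD : 0 < D) (hab : b < a)
    (S I P : EuclideanSpace ℝ (Fin N) → ℝ → ℝ)
    (hS : ParaSol Ω S) (hI : ParaSol Ω I) (hP : ParaSol Ω P)
    (heqS : ∀ x ∈ Ω, ∀ t > (0 : ℝ),
      deriv (fun s => S x s) t - d * vlap (fun y => S y t) x
        = a * (S x t + I x t) - b * S x t - c * (S x t + I x t) * S x t
          - k * I x t * S x t - el * S x t * P x t)
    (heqI : ∀ x ∈ Ω, ∀ t > (0 : ℝ),
      deriv (fun s => I x s) t - d * vlap (fun y => I y t) x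
        = k * I x t * S x t - b * I x t - c * (S x t + I x t) * I x t
          - gam * I x t * P x t)
    (heqP : ∀ x ∈ Ω, ∀ t > (0 : ℝ),
      deriv (fun s => P x s) t - D * vlap (fun y => P y t) x
        = th * S x t * P x t + sig * I x t * P x t - rh * P x t) :
    ∀ x ∈ closure Ω, ∀ t ≥ (0 : ℝ),
      S x t + I x t
        ≤ max (sSup ((fun y => S y 0 + I y 0) '' closure Ω)) ((a - b) / c) :=
  stmt15_general Ω hΩopen hΩbd a b c k el gam d hc hel hgam hd hab S I P hS hI hP heqS heqI
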